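/- arXiv:2509.12165 — 4 statements merged into one kernel-verified Lean document; each statement's English description precedes it below -/
import Mathlib

section
/- If f : ℝⁿ → ℝ has L-Lipschitz gradient, 0 < λ < 1/L, and x⁺ is a minimizer of y ↦ f(y) + (1/(2λ))‖y - x‖², then f(x) - f(x⁺) ≥ (λ/2)‖∇f(x⁺)‖². -/
open Metric Set Filter

/-- Proximal decrease property. -/
theorem prox_decrease {n : ℕ} (f : EuclideanSpace ℝ (Fin n) → ℝ)
    (f' : EuclideanSpace ℝ (Fin n) → EuclideanSpace ℝ (Fin n)) (L lam : ℝ)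
    (hgrad : ∀ x, HasGradientAt f (f' x) x)
    (hlip : ∀ x y, ‖f' x - f' y‖ ≤ L * ‖x - y‖)
    (hlam : 0 < lam) (hlamL : lam < 1 / L)
    (x xp : EuclideanSpace ℝ (Fin n))
    (hmin : ∀ y, f xp + 1 / (2 * lam) * ‖xp - x‖ ^ 2 ≤ f y + 1 / (2 * lam) * ‖y - x‖ ^ 2) :
    f x - f xp ≥ lam / 2 * ‖f' xp‖ ^ 2 := by
  set g : EuclideanSpace ℝ (Fin n) → ℝ := fun y => f y + 1 / (2 * lam) * ‖y - x‖ ^ 2 with hg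
  set G : EuclideanSpace ℝ (Fin n) := f' xp + (1 / lam) • (xp - x) with hG
  -- gradient of g at xp
  have hns : HasFDerivAt (fun y : EuclideanSpace ℝ (Fin n) => ‖y - x‖ ^ 2)
      (2 • (innerSL ℝ (xp - x))) xp := by
    have h1 : HasFDerivAt (fun y : EuclideanSpace ℝ (Fin n) => y - x)
        (ContinuousLinearMap.id ℝ _) xp := (hasFDerivAt_id xp).sub_const x
    simpa using h1.norm_sq
  have hgd : HasFDerivAt g ((InnerProductSpace.toDual ℝ _) G) xp := by
    have := ((hgrad xp).hasFDerivAt).add (hns.const_mul (1 / (2 * lam)))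
    refine this.congr_fderiv ?_
    ext v
    simp only [hG, map_add, map_smul]
    simp [InnerProductSpace.toDual_apply_apply, real_inner_smul_left, inner_add_left,
      ContinuousLinearMap.add_apply, ContinuousLinearMap.smul_apply, two_smul, inner_add_left]
    ring
  have hlocmin : IsLocalMin g xp := by
    apply IsMinOn.isLocalMin (s := Set.univ)
    · intro y _; exact hmin y
    · exact Filter.univ_mem
  have hzero : G = 0 := by
    have := hlocmin.hasFDerivAt_eq_zero hgd
    have h0 : (InnerProductSpace.toDual ℝ (EuclideanSpace ℝ (Fin n))) G =
        (InnerProductSpace.toDual ℝ (EuclideanSpace ℝ (Fin n))) 0 := by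
      rw [this, map_zero]
    exact (InnerProductSpace.toDual ℝ _).injective h0
  -- xp - x = -lam • f' xp
  have hxp : xp - x = (-lam) • f' xp := by
    have h1 : (1 / lam) • (xp - x) = -f' xp := by
      rw [hG] at hzero
      linear_combination (norm := module) hzero
    have := congrArg (fun v => lam • v) h1
    simpa [smul_smul, hlam.ne', neg_smul] using this
  have hnorm : ‖xp - x‖ ^ 2 = lam ^ 2 * ‖f' xp‖ ^ 2 := by
    rw [hxp, norm_smul]
    simp [mul_pow, abs_of_pos hlam]
  have hx := hmin x
  simp only [sub_self, norm_zero] at hx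
  have : f xp + 1 / (2 * lam) * (lam ^ 2 * ‖f' xp‖ ^ 2) ≤ f x := by
    rw [← hnorm]; simpa using hx
  have heq : 1 / (2 * lam) * (lam ^ 2 * ‖f' xp‖ ^ 2) = lam / 2 * ‖f' xp‖ ^ 2 := by
    field_simp
  linarith [heq ▸ this]
end

section
/- If f : ℝⁿ → ℝ has L-Lipschitz gradient, 0 < λ < 1/L, and x⁺ is a minimizer of y ↦ f(y) + (1/(2λ))‖y - x‖², then ‖x⁺ - x‖ ≤ (2λ/(1 - Lλ))‖∇f(x)‖. -/
open Metric Set Filter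

/-- Bound on the length of a proximal step. -/
theorem prox_step_bound {n : ℕ} (f : EuclideanSpace ℝ (Fin n) → ℝ)
    (f' : EuclideanSpace ℝ (Fin n) → EuclideanSpace ℝ (Fin n)) (L lam : ℝ)
    (hgrad : ∀ x, HasGradientAt f (f' x) x)
    (hlip : ∀ x y, ‖f' x - f' y‖ ≤ L * ‖x - y‖)
    (hlam : 0 < lam) (hlamL : lam < 1 / L)
    (x xp : EuclideanSpace ℝ (Fin n))
    (hmin : ∀ y, f xp + 1 / (2 * lam) * ‖xp - x‖ ^ 2 ≤ f y + 1 / (2 * lam) * ‖y - x‖ ^ 2) :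
    ‖xp - x‖ ≤ 2 * lam / (1 - L * lam) * ‖f' x‖ := by
  set d : EuclideanSpace ℝ (Fin n) := xp - x with hd
  have hL : 0 < L := by
    by_contra h
    push_neg at h
    have : (1 : ℝ) / L ≤ 0 := one_div_nonpos.mpr h
    linarith
  have hLlam : L * lam < 1 := by
    have := (lt_div_iff₀ hL).mp hlamL
    nlinarith
  -- derivative of t ↦ f (x + t • d)
  have key : ∀ t : ℝ, HasDerivAt (fun s : ℝ => f (x + s • d))
      (inner ℝ (f' (x + t • d)) d : ℝ) t := by
    intro t
    have h1 : HasDerivAt (fun s : ℝ => x + s • d) d t := by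
      simpa using ((hasDerivAt_id t).smul_const d).const_add x
    have h2 := (hgrad (x + t • d)).hasFDerivAt.comp_hasDerivAt t h1
    simp only [InnerProductSpace.toDual_apply_apply] at h2
    exact h2
  -- φ t = f (x + t d) - t ⟪f' x, d⟫ - f x
  set g : EuclideanSpace ℝ (Fin n) := f' x with hg
  have keyφ : ∀ t : ℝ, HasDerivAt (fun s : ℝ => f (x + s • d) - s * (inner ℝ g d : ℝ) - f x)
      ((inner ℝ (f' (x + t • d) - g) d : ℝ)) t := by
    intro t
    have h := ((key t).sub ((hasDerivAt_id t).mul_const (inner ℝ g d : ℝ))).sub_const (f x)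
    simpa [inner_sub_left] using h
  -- bound
  have bound : ∀ t ∈ Set.Ico (0:ℝ) 1,
      ‖(inner ℝ (f' (x + t • d) - g) d : ℝ)‖ ≤ (L * ‖d‖ ^ 2) * t := by
    intro t ht
    calc ‖(inner ℝ (f' (x + t • d) - g) d : ℝ)‖
        ≤ ‖f' (x + t • d) - g‖ * ‖d‖ := norm_inner_le_norm _ _
      _ ≤ (L * ‖t • d‖) * ‖d‖ := by
          have h := hlip (x + t • d) x
          simp only [add_sub_cancel_left] at h
          exact mul_le_mul_of_nonneg_right h (norm_nonneg d)
      _ = (L * ‖d‖ ^ 2) * t := by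
          rw [norm_smul, Real.norm_eq_abs, abs_of_nonneg ht.1]; ring
  have hB : ∀ t : ℝ, HasDerivAt (fun s : ℝ => L * ‖d‖ ^ 2 * s ^ 2 / 2) ((L * ‖d‖ ^ 2) * t) t := by
    intro t
    have := ((hasDerivAt_pow 2 t).const_mul (L * ‖d‖ ^ 2)).div_const 2
    refine this.congr_deriv ?_
    push_cast
    ring
  have main := image_norm_le_of_norm_deriv_right_le_deriv_boundary
    (f := fun s : ℝ => f (x + s • d) - s * (inner ℝ g d : ℝ) - f x)
    (f' := fun t => (inner ℝ (f' (x + t • d) - g) d : ℝ))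
    (a := 0) (b := 1)
    (fun t _ => (keyφ t).continuousAt.continuousWithinAt)
    (fun t _ => (keyφ t).hasDerivWithinAt)
    (B := fun s : ℝ => L * ‖d‖ ^ 2 * s ^ 2 / 2)
    (B' := fun t => (L * ‖d‖ ^ 2) * t)
    (by simp) hB bound (Set.right_mem_Icc.mpr zero_le_one)
  have hx1 : x + d = xp := by rw [hd]; abel
  have main' : |f xp - inner ℝ g d - f x| ≤ L * ‖d‖ ^ 2 / 2 := by
    simpa [hx1, Real.norm_eq_abs] using main
  -- descent lower bound
  have hdesc : f x + (inner ℝ g d : ℝ) - L / 2 * ‖d‖ ^ 2 ≤ f xp := by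
    have := abs_le.mp main'
    linarith [this.1]
  -- minimizer inequality with y = x
  have hm := hmin x
  simp only [sub_self, norm_zero] at hm
  have hm' : f xp + 1 / (2 * lam) * ‖d‖ ^ 2 ≤ f x := by
    simpa [hd] using hm
  have hc : 0 < 1 / (2 * lam) - L / 2 := by
    rw [sub_pos, div_lt_div_iff₀ (by norm_num) (by positivity)]
    nlinarith
  have hkey : (1 / (2 * lam) - L / 2) * ‖d‖ ^ 2 ≤ ‖g‖ * ‖d‖ := by
    have hcs : -(inner ℝ g d : ℝ) ≤ ‖g‖ * ‖d‖ := by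
      have := abs_le.mp (abs_real_inner_le_norm g d)
      linarith [this.1]
    nlinarith
  rcases eq_or_lt_of_le (norm_nonneg d) with h0 | h0
  · rw [← h0]
    have h1 : 0 < 1 - L * lam := by linarith
    positivity
  · have h1 : (1 / (2 * lam) - L / 2) * ‖d‖ ≤ ‖g‖ := by
      have := mul_le_mul_of_nonneg_right hkey (le_of_lt (inv_pos.mpr h0))
      calc (1 / (2 * lam) - L / 2) * ‖d‖
          = (1 / (2 * lam) - L / 2) * ‖d‖ ^ 2 * ‖d‖⁻¹ := by
            field_simp
        _ ≤ ‖g‖ * ‖d‖ * ‖d‖⁻¹ := this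
        _ = ‖g‖ := by field_simp
    rw [hd] at h0 ⊢
    rw [div_mul_eq_mul_div, le_div_iff₀ (by linarith)]
    have h2 : (1 / (2 * lam) - L / 2) = (1 - L * lam) / (2 * lam) := by
      field_simp
    rw [h2] at h1
    have := mul_le_mul_of_nonneg_right h1 (le_of_lt (by positivity : (0:ℝ) < 2 * lam))
    calc ‖xp - x‖ * (1 - L * lam)
        = (1 - L * lam) / (2 * lam) * ‖xp - x‖ * (2 * lam) := by field_simp
      _ ≤ ‖g‖ * (2 * lam) := this
      _ = 2 * lam * ‖f' x‖ := by rw [hg]; ring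
end

section
/- Let f : ℝⁿ → ℝ be C¹ and let x : [0,∞) → ℝⁿ solve the gradient flow ẋ(t) = -∇f(x(t)). If f(x̄) ≤ f(x(t)) for all t and there is a concave increasing C¹ bijection ψ : [0,∞) → [0,∞) with ψ(0)=0 such that ∫₀ᵀ ‖ẋ(t)‖ dt ≤ ψ(f(x(0)) - f(x(T))) for all T > 0 for which x([0,T]) ⊆ B_ε(x̄), and if x(0) ∈ B_δ(x̄) with δ < ε and sup{f(x) - f(x̄) : x ∈ B_δ(x̄)} ≤ ψ⁻¹(ε - δ), then x(t) ∈ B_ε(x̄) for all t ≥ 0. -/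
open Metric Set Filter

open Topology MeasureTheory intervalIntegral

/-- Trapping argument: under a Kurdyka–Łojasiewicz type length bound, a gradient flow
trajectory starting close enough to a local minimum stays in `B_ε(x̄)` forever. -/
theorem gradient_flow_trapping {n : ℕ} (f : EuclideanSpace ℝ (Fin n) → ℝ)
    (f' : EuclideanSpace ℝ (Fin n) → EuclideanSpace ℝ (Fin n))
    (hgrad : ∀ y, HasGradientAt f (f' y) y)
    (x : ℝ → EuclideanSpace ℝ (Fin n))
    (hflow : ∀ t, 0 ≤ t → HasDerivAt x (-(f' (x t))) t)
    (xbar : EuclideanSpace ℝ (Fin n)) (ε δ : ℝ) (hδ : 0 < δ) (hδε : δ < ε)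
    (hmin : ∀ t, 0 ≤ t → f xbar ≤ f (x t))
    (ψ : ℝ → ℝ) (hψ0 : ψ 0 = 0) (hψmono : StrictMonoOn ψ (Set.Ici 0))
    (hψconc : ConcaveOn ℝ (Set.Ici 0) ψ)
    (hψC1 : ContDiffOn ℝ 1 ψ (Set.Ici 0))
    (hψbij : Set.BijOn ψ (Set.Ici 0) (Set.Ici 0))
    (hlen : ∀ T > (0 : ℝ), (∀ t ∈ Set.Icc 0 T, x t ∈ ball xbar ε) →
      ∫ t in (0 : ℝ)..T, ‖f' (x t)‖ ≤ ψ (f (x 0) - f (x T)))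
    (hx0 : x 0 ∈ ball xbar δ)
    (hsup : ∀ y ∈ ball xbar δ, ψ (f y - f xbar) ≤ ε - δ) :
    ∀ t, 0 ≤ t → x t ∈ ball xbar ε := by
  -- continuity of the trajectory on `[0, ∞)`
  have hcx : ∀ t, 0 ≤ t → ContinuousAt x t := fun t ht => (hflow t ht).continuousAt
  -- derivative of `t ↦ f (x t)` on `[0, ∞)`
  have hg : ∀ t, 0 ≤ t → HasDerivAt (fun s => f (x s)) (-‖f' (x t)‖ ^ 2) t := by
    intro t ht
    have h := ((hgrad (x t)).hasFDerivAt).comp_hasDerivAt t (hflow t ht)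
    have hval : (InnerProductSpace.toDual ℝ _ (f' (x t))) (-(f' (x t))) = -‖f' (x t)‖ ^ 2 := by
      rw [InnerProductSpace.toDual_apply_apply, inner_neg_right, real_inner_self_eq_norm_sq]
    rw [hval] at h
    exact h
  -- `t ↦ f (x t)` is antitone on `[0, ∞)`
  have hanti : AntitoneOn (fun s => f (x s)) (Set.Ici 0) := by
    apply antitoneOn_of_deriv_nonpos (convex_Ici 0)
    · exact fun t ht => (hg t ht).continuousAt.continuousWithinAt
    · intro t ht
      rw [interior_Ici] at ht
      exact (hg t ht.le).differentiableAt.differentiableWithinAt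
    · intro t ht
      rw [interior_Ici] at ht
      rw [(hg t ht.le).deriv]
      simp [sq_nonneg]
  -- key estimate: as long as the trajectory stays in `B_ε(x̄)` up to time `T'`,
  -- the distance travelled is at most `ε - δ`
  have key : ∀ T' > (0 : ℝ), (∀ t ∈ Set.Icc 0 T', x t ∈ ball xbar ε) →
      dist (x T') (x 0) ≤ ε - δ := by
    intro T' hT' hball
    -- integrability of `‖f' (x t)‖ ^ 2` from monotonicity
    have hint2 : IntegrableOn (fun t => ‖f' (x t)‖ ^ 2) (Set.Ioc 0 T') := by
      apply integrableOn_deriv_of_nonneg (g := fun s => -f (x s))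
      · exact fun t ht => ((hg t ht.1).continuousAt.neg).continuousWithinAt
      · intro t ht
        have h := (hg t ht.1.le).neg; rw [neg_neg] at h; exact h
      · intro t ht; positivity
    -- the velocity field is interval integrable
    have hmeas : AEStronglyMeasurable (fun t => -(f' (x t)))
        (volume.restrict (Set.Ioc 0 T')) := by
      apply (stronglyMeasurable_deriv x).aestronglyMeasurable.restrict.congr
      filter_upwards [ae_restrict_mem measurableSet_Ioc] with t ht
      exact (hflow t ht.1.le).deriv
    have hvint : IntervalIntegrable (fun t => -(f' (x t))) volume 0 T' := by
      rw [intervalIntegrable_iff, uIoc_of_le hT'.le]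
      apply Integrable.mono'
        ((integrable_const (1 : ℝ)).add (hint2.mono_set Set.Subset.rfl)) hmeas
      filter_upwards with t
      have h1 : ‖f' (x t)‖ ≤ 1 + ‖f' (x t)‖ ^ 2 := by nlinarith [norm_nonneg (f' (x t))]
      simpa using h1
    -- fundamental theorem of calculus
    have hftc : ∫ t in (0 : ℝ)..T', -(f' (x t)) = x T' - x 0 := by
      apply integral_eq_sub_of_hasDerivAt _ hvint
      intro t ht
      rw [Set.uIcc_of_le hT'.le] at ht
      exact hflow t ht.1
    have hd : dist (x T') (x 0) ≤ ∫ t in (0 : ℝ)..T', ‖f' (x t)‖ := by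
      rw [dist_eq_norm, ← hftc]
      have := intervalIntegral.norm_integral_le_integral_norm
        (μ := volume) (f := fun t => -(f' (x t))) (a := 0) (b := T') hT'.le
      simpa using this
    have hψle : ψ (f (x 0) - f (x T')) ≤ ψ (f (x 0) - f xbar) := by
      have h1 : f xbar ≤ f (x T') := hmin T' hT'.le
      have h2 : f (x T') ≤ f (x 0) := hanti (Set.self_mem_Ici) hT'.le hT'.le
      exact hψmono.monotoneOn (by simp; linarith) (by simp; linarith [hmin 0 le_rfl])
        (by linarith)
    calc dist (x T') (x 0) ≤ ∫ t in (0 : ℝ)..T', ‖f' (x t)‖ := hd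
      _ ≤ ψ (f (x 0) - f (x T')) := hlen T' hT' hball
      _ ≤ ψ (f (x 0) - f xbar) := hψle
      _ ≤ ε - δ := hsup (x 0) hx0
  -- trapping argument
  by_contra hcon
  push_neg at hcon
  obtain ⟨t₀, ht₀, hout⟩ := hcon
  set S : Set ℝ := Set.Icc 0 t₀ ∩ (fun t => dist (x t) xbar) ⁻¹' Set.Ici ε with hS
  have hSclosed : IsClosed S := by
    apply ContinuousOn.preimage_isClosed_of_isClosed _ isClosed_Icc isClosed_Ici
    intro t ht
    exact ((hcx t ht.1).continuousWithinAt).dist continuousWithinAt_const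
  have hSne : S.Nonempty := by
    refine ⟨t₀, ⟨ht₀, le_rfl⟩, ?_⟩
    simpa [Set.mem_preimage, not_lt] using hout
  have hSbdd : BddBelow S := ⟨0, fun t ht => ht.1.1⟩
  set T := sInf S with hT
  have hTS : T ∈ S := hSclosed.csInf_mem hSne hSbdd
  have hTε : ε ≤ dist (x T) xbar := hTS.2
  have hT0 : 0 < T := by
    rcases lt_or_eq_of_le hTS.1.1 with h | h
    · exact h
    · exfalso
      rw [← h] at hTε
      have := mem_ball.mp hx0
      linarith
  -- before time `T`, the trajectory is in the ball
  have hbefore : ∀ s, 0 < s → s < T → ∀ t ∈ Set.Icc 0 s, x t ∈ ball xbar ε := by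
    intro s hs hsT t ht
    by_contra htout
    have htS : t ∈ S := by
      refine ⟨⟨ht.1, le_trans ht.2 (le_trans hsT.le hTS.1.2)⟩, ?_⟩
      simpa [Set.mem_preimage, not_lt] using htout
    have : T ≤ t := csInf_le hSbdd htS
    linarith [ht.2]
  -- distance bound up to time `T` by taking a limit
  have hlim : dist (x T) (x 0) ≤ ε - δ := by
    have htend : Tendsto (fun s => dist (x s) (x 0)) (𝓝[<] T) (𝓝 (dist (x T) (x 0))) :=
      ((hcx T hT0.le).dist continuousAt_const).mono_left nhdsWithin_le_nhds
    apply le_of_tendsto htend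
    filter_upwards [Ioo_mem_nhdsLT_of_mem (Set.mem_Ioc.mpr ⟨hT0, le_rfl⟩)] with s hs
    exact key s hs.1 (hbefore s hs.1 hs.2)
  -- contradiction
  have htri : ε - δ < dist (x T) (x 0) := by
    have h1 : dist (x T) xbar ≤ dist (x T) (x 0) + dist (x 0) xbar := dist_triangle _ _ _
    have h2 : dist (x 0) xbar < δ := mem_ball.mp hx0
    linarith
  linarith
end

section
/- Let f : ℝⁿ → ℝ have L-Lipschitz gradient, and let x_0, …, x_K be points generated backwards via x_k ∈ argmax_y (f(y) - ‖y - x_{k+1}‖²/(2α_k)) with α_k ∈ (0, 1/L). Suppose all the points lie in a set U on which ‖∇f‖ ≥ ζ > 0. Then f(x_0) - f(x_K) ≥ (ζ²/2) ∑_{k=0}^{K-1} α_k. -/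
open Metric Set Filter

/-- Stationarity at the argmax of `y ↦ f y - ‖y - c‖²/(2a)`. -/
lemma backward_step_gradient {n : ℕ} (f : EuclideanSpace ℝ (Fin n) → ℝ)
    (f' : EuclideanSpace ℝ (Fin n) → EuclideanSpace ℝ (Fin n))
    (hgrad : ∀ x, HasGradientAt f (f' x) x)
    (a : ℝ) (ha : 0 < a) (p c : EuclideanSpace ℝ (Fin n))
    (hmax : ∀ y, f y - ‖y - c‖ ^ 2 / (2 * a) ≤ f p - ‖p - c‖ ^ 2 / (2 * a)) :
    f' p = (1 / a) • (p - c) := by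
  have hf : HasFDerivAt f (InnerProductSpace.toDual ℝ _ (f' p)) p :=
    (hgrad p).hasFDerivAt
  have hsub : HasFDerivAt (fun y : EuclideanSpace ℝ (Fin n) => y - c)
      (ContinuousLinearMap.id ℝ _) p := (hasFDerivAt_id p).sub_const c
  have hq : HasFDerivAt (fun y : EuclideanSpace ℝ (Fin n) => ‖y - c‖ ^ 2)
      (2 • (innerSL ℝ (p - c)).comp (ContinuousLinearMap.id ℝ _)) p := hsub.norm_sq
  have hg : HasFDerivAt (fun y : EuclideanSpace ℝ (Fin n) => f y - ‖y - c‖ ^ 2 / (2 * a))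
      (InnerProductSpace.toDual ℝ _ (f' p) -
        (2 * a)⁻¹ • (2 • (innerSL ℝ (p - c)).comp (ContinuousLinearMap.id ℝ _))) p := by
    exact (hf.sub (hq.const_smul (2 * a)⁻¹)).congr_of_eventuallyEq
      (Filter.Eventually.of_forall fun y => by simp only [Pi.sub_apply, Pi.smul_apply, smul_eq_mul]; ring)
  have hloc : IsLocalMax (fun y : EuclideanSpace ℝ (Fin n) =>
      f y - ‖y - c‖ ^ 2 / (2 * a)) p := Filter.Eventually.of_forall hmax
  have hzero := hloc.hasFDerivAt_eq_zero hg
  apply ext_inner_right ℝ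
  intro v
  have hv := congrArg (fun D => D v) hzero
  simp only [ContinuousLinearMap.sub_apply, ContinuousLinearMap.smul_apply,
    ContinuousLinearMap.coe_smul', Pi.smul_apply, ContinuousLinearMap.comp_apply,
    ContinuousLinearMap.id_apply, ContinuousLinearMap.zero_apply, innerSL_apply_apply,
    InnerProductSpace.toDual_apply_apply, smul_eq_mul, nsmul_eq_mul, Nat.cast_ofNat] at hv
  have : inner ℝ (f' p) v = (2 * a)⁻¹ * (2 * inner ℝ (p - c) v) := by linarith
  rw [this, real_inner_smul_left]
  field_simp

/-- Along backward proximal steps staying in a region where `‖∇f‖ ≥ ζ`, the function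
value drops by at least `(ζ²/2) ∑ α_k`. -/
theorem backward_steps_decrease {n : ℕ} (f : EuclideanSpace ℝ (Fin n) → ℝ)
    (f' : EuclideanSpace ℝ (Fin n) → EuclideanSpace ℝ (Fin n)) (L : ℝ)
    (hgrad : ∀ x, HasGradientAt f (f' x) x)
    (hlip : ∀ x y, ‖f' x - f' y‖ ≤ L * ‖x - y‖)
    (α : ℕ → ℝ) (hα : ∀ k, 0 < α k ∧ α k < 1 / L)
    (K : ℕ) (x : ℕ → EuclideanSpace ℝ (Fin n))
    (hback : ∀ k < K, ∀ y,
      f y - ‖y - x (k + 1)‖ ^ 2 / (2 * α k) ≤ f (x k) - ‖x k - x (k + 1)‖ ^ 2 / (2 * α k))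
    (U : Set (EuclideanSpace ℝ (Fin n))) (hU : ∀ k ≤ K, x k ∈ U)
    (ζ : ℝ) (hζ : 0 < ζ) (hgradlb : ∀ y ∈ U, ζ ≤ ‖f' y‖) :
    f (x 0) - f (x K) ≥ ζ ^ 2 / 2 * ∑ k ∈ Finset.range K, α k := by
  have key : ∀ k < K, ζ ^ 2 / 2 * α k ≤ f (x k) - f (x (k + 1)) := by
    intro k hk
    have ha : 0 < α k := (hα k).1
    have hgradeq := backward_step_gradient f f' hgrad (α k) ha (x k) (x (k + 1))
      (hback k hk)
    have hnorm : ‖x k - x (k + 1)‖ = α k * ‖f' (x k)‖ := by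
      rw [hgradeq, norm_smul]
      rw [Real.norm_eq_abs, abs_of_pos (by positivity : (0:ℝ) < 1 / α k)]
      field_simp
    have hζle : ζ ≤ ‖f' (x k)‖ := hgradlb _ (hU k (le_of_lt hk))
    have hlen : α k * ζ ≤ ‖x k - x (k + 1)‖ := by
      rw [hnorm]
      exact mul_le_mul_of_nonneg_left hζle ha.le
    have hdec := hback k hk (x (k + 1))
    simp only [sub_self, norm_zero] at hdec
    norm_num at hdec
    -- hdec : f (x (k+1)) - 0 ≤ f (x k) - ‖x k - x (k+1)‖^2/(2 * α k)
    have hsq : (α k * ζ) ^ 2 ≤ ‖x k - x (k + 1)‖ ^ 2 := by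
      apply pow_le_pow_left₀ (by positivity) hlen
    have h2 : (α k * ζ) ^ 2 / (2 * α k) ≤ ‖x k - x (k + 1)‖ ^ 2 / (2 * α k) := by
      gcongr
    have heq : (α k * ζ) ^ 2 / (2 * α k) = ζ ^ 2 / 2 * α k := by
      field_simp
    rw [heq] at h2
    linarith
  have tel : f (x 0) - f (x K) = ∑ k ∈ Finset.range K, (f (x k) - f (x (k + 1))) :=
    (Finset.sum_range_sub' (fun k => f (x k)) K).symm
  rw [tel, Finset.mul_sum]
  exact Finset.sum_le_sum fun k hk => key k (Finset.mem_range.mp hk)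
end
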